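/- For every integer n ≥ 2 and every integer q ≥ 1, set P_q = 2(2n²−1)q(q+2n−1) − 4n(2n−1) and t_q := sqrt( (sqrt(P_q² + 8n²(n−1)²(5n−2)) − P_q)/(4n(n−1)) ). Then 0 < t_q ≤ b_B(n), t_1 = b_B(n), and scal_B(n, t_q)/(2n²−1) = q(q+2n−1)/(2(2n−1)); that is, t_q is a degeneracy instant of the canonical variation h_t on SO(2n+1)/Tⁿ, at which scal(h_t)/(m−1) equals the eigenvalue q(q+2n−1)/(2(2n−1)) of the Laplacian of the base sphere S²ⁿ. -/

import Mathlib

/-- Scalar curvature of the canonical variation `h_t` of the normal homogeneous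
metric on the full flag manifold `SO(2n+1)/Tⁿ`. -/
noncomputable def scalB (n : ℕ) (t : ℝ) : ℝ :=
  (5 * n ^ 3 - 2 * n ^ 2 * t ^ 4 + 8 * n ^ 2 * t ^ 2 - 7 * n ^ 2
    + 2 * n * t ^ 4 - 4 * n * t ^ 2 + 2 * n) / (4 * (2 * n - 1) * t ^ 2)

/-- The first degeneracy instant of `h_t` on `SO(2n+1)/Tⁿ`. -/
noncomputable def bB (n : ℕ) : ℝ :=
  Real.sqrt (Real.sqrt ((8 * n ^ 2 + 5 * n - 2) / 2) - 2 * n)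

/-- The auxiliary quantity `P_q = 2(2n²-1)q(q+2n-1) - 4n(2n-1)`. -/
noncomputable def PB (n q : ℕ) : ℝ :=
  2 * (2 * n ^ 2 - 1) * q * (q + 2 * n - 1) - 4 * n * (2 * n - 1)

/-- The degeneracy instants `t_q` of `h_t` on `SO(2n+1)/Tⁿ`. -/
noncomputable def tB (n q : ℕ) : ℝ :=
  Real.sqrt ((Real.sqrt ((PB n q) ^ 2 + 8 * n ^ 2 * (n - 1) ^ 2 * (5 * n - 2)) - PB n q)
    / (4 * n * (n - 1)))

/-!
The square `x = t_q²` is the positive root of `2n(n-1)x² + P_q x = n(n-1)(5n-2)`, and after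
clearing denominators this quadratic is exactly the equation `scal(h_t) = (2n²-1)λ_q` with
`λ_q = q(q+2n-1)/(2(2n-1))`. Since `P ↦ √(P² + D) - P` is decreasing and `P_q` increases with `q`,
`t_q ≤ t_1`; at `q = 1` the radicand `P_1² + D` is `(4n(n-1))²(8n²+5n-2)/2`, giving `t_1 = b_B(n)`.
-/

lemma lt_sqrt_sq_add {D : ℝ} (hD : 0 < D) (P : ℝ) : P < √(P ^ 2 + D) :=
  (le_abs_self P).trans_lt <| (Real.lt_sqrt (abs_nonneg P)).2 <| by rw [sq_abs]; linarith

lemma sqrt_sq_add_sub_sq_add_mul {D : ℝ} (hD : 0 ≤ D) (P : ℝ) :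
    (√(P ^ 2 + D) - P) ^ 2 + 2 * P * (√(P ^ 2 + D) - P) = D := by
  have := Real.sq_sqrt (by positivity : 0 ≤ P ^ 2 + D)
  linear_combination this

lemma antitone_sqrt_sq_add_sub {D : ℝ} (hD : 0 < D) : Antitone fun P : ℝ ↦ √(P ^ 2 + D) - P := by
  intro P P' hPP'
  have hP := lt_sqrt_sq_add hD P
  have hsq := Real.sq_sqrt (by positivity : 0 ≤ P ^ 2 + D)
  suffices √(P' ^ 2 + D) ≤ √(P ^ 2 + D) + (P' - P) by dsimp only; linarith
  rw [Real.sqrt_le_iff]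
  constructor
  · linarith [Real.sqrt_nonneg (P ^ 2 + D)]
  · nlinarith [mul_le_mul_of_nonneg_left hP.le (sub_nonneg.2 hPP')]

section
variable {n : ℕ}

lemma tB_constant_pos (hn : 2 ≤ n) : (0 : ℝ) < 8 * n ^ 2 * (n - 1) ^ 2 * (5 * n - 2) := by
  have hN : (2 : ℝ) ≤ n := by exact_mod_cast hn
  have : (0 : ℝ) < (n - 1) ^ 2 := by nlinarith
  have : (0 : ℝ) < 5 * n - 2 := by linarith
  positivity

lemma tB_denominator_pos (hn : 2 ≤ n) : (0 : ℝ) < 4 * n * (n - 1) := by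
  have hN : (2 : ℝ) ≤ n := by exact_mod_cast hn
  nlinarith

lemma tB_radicand_pos (hn : 2 ≤ n) (q : ℕ) :
    0 < (√(PB n q ^ 2 + 8 * n ^ 2 * (n - 1) ^ 2 * (5 * n - 2)) - PB n q) / (4 * n * (n - 1)) :=
  div_pos (sub_pos.2 (lt_sqrt_sq_add (tB_constant_pos hn) _)) (tB_denominator_pos hn)

lemma tB_pos (hn : 2 ≤ n) (q : ℕ) : 0 < tB n q :=
  Real.sqrt_pos.2 (tB_radicand_pos hn q)

lemma tB_sq_quadratic (hn : 2 ≤ n) (q : ℕ) :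
    2 * n * (n - 1) * (tB n q ^ 2) ^ 2 + PB n q * tB n q ^ 2 = n * (n - 1) * (5 * n - 2) := by
  have hN : (2 : ℝ) ≤ n := by exact_mod_cast hn
  have : (n - 1 : ℝ) ≠ 0 := by linarith
  have hroot := sqrt_sq_add_sub_sq_add_mul (tB_constant_pos hn).le (PB n q)
  rw [tB, Real.sq_sqrt (tB_radicand_pos hn q).le]
  generalize √(PB n q ^ 2 + 8 * n ^ 2 * (n - 1) ^ 2 * (5 * n - 2)) - PB n q = y at hroot ⊢
  field_simp
  linear_combination 2 * hroot

lemma PB_one : PB n 1 = 8 * n ^ 2 * (n - 1) := by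
  rw [PB]; push_cast; ring

lemma PB_one_le (hn : 1 ≤ n) (q : ℕ) (hq : 1 ≤ q) : PB n 1 ≤ PB n q := by
  have hN : (1 : ℝ) ≤ n := by exact_mod_cast hn
  have hQ : (1 : ℝ) ≤ q := by exact_mod_cast hq
  have hdiff : PB n q - PB n 1 = 2 * (2 * n ^ 2 - 1) * (q - 1) * (q + 2 * n) := by
    rw [PB, PB]; push_cast; ring
  have : (0 : ℝ) ≤ 2 * n ^ 2 - 1 := by nlinarith
  have : (0 : ℝ) ≤ 2 * (2 * n ^ 2 - 1) * (q - 1) * (q + 2 * n) := by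
    have : (0 : ℝ) ≤ q - 1 := by linarith
    positivity
  linarith

lemma tB_one (hn : 2 ≤ n) : tB n 1 = bB n := by
  have hc := tB_denominator_pos hn
  have hN : (2 : ℝ) ≤ n := by exact_mod_cast hn
  have : (n - 1 : ℝ) ≠ 0 := by linarith
  have hdisc : PB n 1 ^ 2 + 8 * n ^ 2 * (n - 1) ^ 2 * (5 * n - 2)
      = (4 * n * (n - 1)) ^ 2 * ((8 * n ^ 2 + 5 * n - 2) / 2) := by
    rw [PB_one]; ring
  rw [tB, bB, hdisc, Real.sqrt_mul (sq_nonneg _), Real.sqrt_sq hc.le, PB_one]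
  congr 1
  field_simp
  ring

lemma tB_le_bB (hn : 2 ≤ n) (q : ℕ) (hq : 1 ≤ q) : tB n q ≤ bB n := by
  rw [← tB_one hn]
  have hP := PB_one_le (by omega : 1 ≤ n) q hq
  exact Real.sqrt_le_sqrt <| div_le_div_of_nonneg_right
    (antitone_sqrt_sq_add_sub (tB_constant_pos hn) hP) (tB_denominator_pos hn).le

lemma scalB_eq_of_quadratic {t P : ℝ} (hn : 1 ≤ n) (ht : t ≠ 0)
    (h : 2 * n * (n - 1) * (t ^ 2) ^ 2 + P * t ^ 2 = n * (n - 1) * (5 * n - 2)) :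
    scalB n t = (P + 4 * n * (2 * n - 1)) / (4 * (2 * n - 1)) := by
  have hN : (1 : ℝ) ≤ n := by exact_mod_cast hn
  have : (2 * n - 1 : ℝ) ≠ 0 := by linarith
  have : (4 * (2 * n - 1) : ℝ) ≠ 0 := by positivity
  rw [scalB, eq_div_iff this, div_mul_eq_mul_div, div_eq_iff (by positivity)]
  linear_combination (-4 * (2 * n - 1) : ℝ) * h

end

/-- For `n ≥ 2` and `q ≥ 1`, `t_q` satisfies `0 < t_q ≤ b_B(n)`, `t_1 = b_B(n)`,
and `scal_B(n,t_q)/(2n²-1) = q(q+2n-1)/(2(2n-1))`: `t_q` is a degeneracy instant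
at which `scal(h_t)/(m-1)` equals the eigenvalue `q(q+2n-1)/(2(2n-1))` of the
Laplacian of the base sphere `S²ⁿ`. -/
theorem tB_degeneracy (n : ℕ) (hn : 2 ≤ n) (q : ℕ) (hq : 1 ≤ q) :
    (0 < tB n q ∧ tB n q ≤ bB n) ∧ tB n 1 = bB n ∧
    scalB n (tB n q) / (2 * n ^ 2 - 1) = q * (q + 2 * n - 1) / (2 * (2 * n - 1)) := by
  refine ⟨⟨tB_pos hn q, tB_le_bB hn q hq⟩, tB_one hn, ?_⟩
  have hN : (2 : ℝ) ≤ n := by exact_mod_cast hn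
  have : (2 * n ^ 2 - 1 : ℝ) ≠ 0 := by nlinarith
  have : (2 * n - 1 : ℝ) ≠ 0 := by linarith
  rw [scalB_eq_of_quadratic (by omega) (tB_pos hn q).ne' (tB_sq_quadratic hn q), PB]
  field_simp
  ring
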